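/- arXiv:2308.12135 — 3 statements merged into one kernel-verified Lean document; each statement's English description precedes it below -/
import Mathlib

section
/- Let r be C² of van der Waals type with spinodal interval (ν_A, ν_B), p̌(ν) = ν r'(ν) − r(ν), and assume that for π ∈ (p̌(ν_B), p̌(ν_A)) the solutions ν₋(π) ∈ (0,ν_A) and ν₊(π) ∈ (ν_B,∞) of p̌(ν) = π exist and depend differentiably on π. Define I(π) = r'(ν₊(π)) − r'(ν₋(π)). Then I'(π) = 1/ν₊(π) − 1/ν₋(π) < 0. -/
open Set

lemma maxwell_branch_deriv
    (r : ℝ → ℝ) (hr : ContDiffOn ℝ 2 r (Ioi 0))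
    (pcheck : ℝ → ℝ)
    (hp : ∀ ν, pcheck ν = ν * deriv r ν - r ν)
    (ν : ℝ → ℝ) (s : Set ℝ) (hs : IsOpen s) (π₀ : ℝ) (hπ : π₀ ∈ s)
    (hsol : ∀ π ∈ s, pcheck (ν π) = π)
    (hx : 0 < ν π₀)
    (hdiff : DifferentiableAt ℝ ν π₀) :
    HasDerivAt (fun π => deriv r (ν π)) (1 / ν π₀) π₀ := by
  set x := ν π₀ with hxdef
  have hxmem : x ∈ Ioi (0:ℝ) := hx
  have hnhds : Ioi (0:ℝ) ∈ nhds x := isOpen_Ioi.mem_nhds hxmem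
  have hr1 : ContDiffOn ℝ 1 (deriv r) (Ioi 0) :=
    hr.deriv_of_isOpen isOpen_Ioi (by norm_num)
  have hdr : DifferentiableAt ℝ (deriv r) x :=
    (hr1.differentiableOn (by norm_num)).differentiableAt hnhds
  have hrdiff : DifferentiableAt ℝ r x :=
    (hr.differentiableOn (by norm_num)).differentiableAt hnhds
  have hdr' : HasDerivAt (deriv r) (deriv (deriv r) x) x := hdr.hasDerivAt
  have hr' : HasDerivAt r (deriv r x) x := hrdiff.hasDerivAt
  -- derivative of pcheck at x is x * r''(x)
  have hpch : HasDerivAt pcheck (x * deriv (deriv r) x) x := by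
    have h1 : HasDerivAt (fun ν => ν * deriv r ν - r ν)
        (1 * deriv r x + x * deriv (deriv r) x - deriv r x) x :=
      ((hasDerivAt_id x).mul hdr').sub hr'
    have : (1 : ℝ) * deriv r x + x * deriv (deriv r) x - deriv r x
        = x * deriv (deriv r) x := by ring
    rw [this] at h1
    exact h1.congr_of_eventuallyEq (Filter.Eventually.of_forall fun y => (hp y))
  have hν' : HasDerivAt ν (deriv ν π₀) π₀ := hdiff.hasDerivAt
  -- pcheck ∘ ν = id near π₀
  have hcomp : HasDerivAt (fun π => pcheck (ν π))
      (x * deriv (deriv r) x * deriv ν π₀) π₀ := hpch.comp π₀ hν'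
  have hid : HasDerivAt (fun π => pcheck (ν π)) 1 π₀ := by
    have heq : (fun π => pcheck (ν π)) =ᶠ[nhds π₀] id :=
      Filter.eventuallyEq_of_mem (hs.mem_nhds hπ) fun y hy => hsol y hy
    exact (hasDerivAt_id π₀).congr_of_eventuallyEq heq
  have hkey : x * deriv (deriv r) x * deriv ν π₀ = 1 :=
    hcomp.unique hid
  have hchain : HasDerivAt (fun π => deriv r (ν π))
      (deriv (deriv r) x * deriv ν π₀) π₀ := hdr'.comp π₀ hν'
  have : deriv (deriv r) x * deriv ν π₀ = 1 / x := by
    field_simp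
    nlinarith [hkey]
  rwa [this] at hchain

/-- Key monotonicity computation for Maxwell states: along the two branches
`ν₋(π) ∈ (0,ν_A)`, `ν₊(π) ∈ (ν_B,∞)` of solutions of `p̌(ν) = π`, the mismatch
`I(π) = r'(ν₊(π)) − r'(ν₋(π))` satisfies `I'(π) = 1/ν₊(π) − 1/ν₋(π) < 0`. -/
theorem maxwell_mismatch_strictly_decreasing
    (r : ℝ → ℝ) (νA νB : ℝ) (νm νp : ℝ → ℝ)
    (hr : ContDiffOn ℝ 2 r (Ioi 0))
    (hA : 0 < νA) (hAB : νA < νB)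
    (pcheck : ℝ → ℝ)
    (hp : ∀ ν, pcheck ν = ν * deriv r ν - r ν)
    (hmem_m : ∀ π ∈ Ioo (pcheck νB) (pcheck νA), νm π ∈ Ioo 0 νA)
    (hmem_p : ∀ π ∈ Ioo (pcheck νB) (pcheck νA), νp π ∈ Ioi νB)
    (hsol_m : ∀ π ∈ Ioo (pcheck νB) (pcheck νA), pcheck (νm π) = π)
    (hsol_p : ∀ π ∈ Ioo (pcheck νB) (pcheck νA), pcheck (νp π) = π)
    (hdiff_m : ∀ π ∈ Ioo (pcheck νB) (pcheck νA), DifferentiableAt ℝ νm π)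
    (hdiff_p : ∀ π ∈ Ioo (pcheck νB) (pcheck νA), DifferentiableAt ℝ νp π) :
    ∀ π ∈ Ioo (pcheck νB) (pcheck νA),
      HasDerivAt (fun π => deriv r (νp π) - deriv r (νm π))
        (1 / νp π - 1 / νm π) π ∧
      1 / νp π - 1 / νm π < 0 := by
  intro π hπ
  have hm0 : 0 < νm π := (hmem_m π hπ).1
  have hp0 : 0 < νp π := lt_trans (lt_trans hA hAB) (hmem_p π hπ)
  have hmlt : νm π < νp π :=
    lt_trans ((hmem_m π hπ).2) (lt_trans hAB (hmem_p π hπ))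
  have hdp := maxwell_branch_deriv r hr pcheck hp νp _ isOpen_Ioo π hπ hsol_p hp0
    (hdiff_p π hπ)
  have hdm := maxwell_branch_deriv r hr pcheck hp νm _ isOpen_Ioo π hπ hsol_m hm0
    (hdiff_m π hπ)
  refine ⟨hdp.sub hdm, ?_⟩
  have : 1 / νp π < 1 / νm π := one_div_lt_one_div_of_lt hm0 hmlt
  linarith
end

section
/- Let r be C² and suppose at (m,c) = (0,c₀) the map F(ν,m,c) = ((r'(ν))²(1+m²/ν²), p̌(ν) + (r'(ν)/ν)m²) satisfies F(ν₀⁻,0,c₀) = F(ν₀⁺,0,c₀) with the 2×2 matrix whose columns are ∂_ν F(ν₀⁻,0,c₀) and ∂_ν F(ν₀⁺,0,c₀) invertible. Then there exist ε > 0 and continuous functions m ↦ ν⁻(m), ν⁺(m) on [0,ε) with ν⁻(0) = ν₀⁻, ν⁺(0) = ν₀⁺ and F(ν⁻(m),m,c) = F(ν⁺(m),m,c) (for the appropriate c = c(m)); i.e., the self-intersection of the Rankine–Hugoniot curve persists for small m. -/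
open Set

lemma RH_aux (r : ℝ → ℝ) (hr : ContDiffOn ℝ 2 r (Ioi 0))
    (F : ℝ → ℝ → ℝ × ℝ)
    (hF : ∀ ν m, F ν m = ((deriv r ν)^2 * (1 + m^2 / ν^2),
         (ν * deriv r ν - r ν) + (deriv r ν / ν) * m^2))
    (ν₀ : ℝ) (h : 0 < ν₀) :
    ∃ D : (ℝ × ℝ) →L[ℝ] (ℝ × ℝ),
      HasStrictFDerivAt (fun q : ℝ × ℝ => F q.1 q.2) D (ν₀, 0) ∧
      ∀ s u : ℝ, D (s, u) = s • deriv (fun ν => F ν 0) ν₀ := by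
  have hΦeq : (fun q : ℝ × ℝ => F q.1 q.2)
      = fun q : ℝ × ℝ => ((deriv r q.1)^2 * (1 + q.2^2 / q.1^2),
          (q.1 * deriv r q.1 - r q.1) + (deriv r q.1 / q.1) * q.2^2) :=
    funext fun q => hF q.1 q.2
  have hgC : ContDiffOn ℝ 1 (deriv r) (Ioi 0) :=
    hr.deriv_of_isOpen isOpen_Ioi (by norm_num)
  have hg1 : ContDiffAt ℝ 1 (fun q : ℝ × ℝ => deriv r q.1) (ν₀, 0) :=
    by
      have := (hgC.contDiffAt (Ioi_mem_nhds h)).comp ((ν₀ : ℝ), (0:ℝ))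
        (contDiffAt_fst : ContDiffAt ℝ 1 (fun q : ℝ × ℝ => q.1) ((ν₀ : ℝ), (0:ℝ)))
      exact this
  have hr1 : ContDiffAt ℝ 1 (fun q : ℝ × ℝ => r q.1) (ν₀, 0) :=
    ((hr.contDiffAt (Ioi_mem_nhds h)).of_le one_le_two).comp _ contDiffAt_fst
  have hfst : ContDiffAt ℝ 1 (fun q : ℝ × ℝ => q.1) ((ν₀ : ℝ), (0:ℝ)) := contDiffAt_fst
  have hsnd : ContDiffAt ℝ 1 (fun q : ℝ × ℝ => q.2) ((ν₀ : ℝ), (0:ℝ)) := contDiffAt_snd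
  have hcd : ContDiffAt ℝ 1 (fun q : ℝ × ℝ => F q.1 q.2) (ν₀, 0) := by
    rw [hΦeq]
    exact ((hg1.pow 2).mul (contDiffAt_const.add
        ((hsnd.pow 2).div (hfst.pow 2) (pow_ne_zero 2 h.ne')))).prodMk
      (((hfst.mul hg1).sub hr1).add ((hg1.div hfst h.ne').mul (hsnd.pow 2)))
  set D := fderiv ℝ (fun q : ℝ × ℝ => F q.1 q.2) (ν₀, 0) with hD
  have hs : HasStrictFDerivAt (fun q : ℝ × ℝ => F q.1 q.2) D (ν₀, 0) :=
    hcd.hasStrictFDerivAt one_ne_zero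
  have hline : HasDerivAt (fun ν : ℝ => ((ν : ℝ), (0:ℝ))) (1, 0) ν₀ :=
    (hasDerivAt_id ν₀).prodMk (hasDerivAt_const ν₀ 0)
  have hcomp : HasDerivAt (fun ν : ℝ => F ν 0) (D (1, 0)) ν₀ :=
    by have := (HasStrictFDerivAt.hasFDerivAt hs).comp_hasDerivAt ν₀ hline; exact this
  have hAdef : deriv (fun ν => F ν 0) ν₀ = D (1, 0) := hcomp.deriv
  have hvert : HasDerivAt (fun m : ℝ => F ν₀ m) (D (0, 1)) 0 :=
    by have := (HasStrictFDerivAt.hasFDerivAt hs).comp_hasDerivAt 0 ((hasDerivAt_const 0 ν₀).prodMk (hasDerivAt_id 0)); exact this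
  have hm2 : HasDerivAt (fun m : ℝ => m^2) 0 0 := by simpa using hasDerivAt_pow 2 (0:ℝ)
  have hv0 : HasDerivAt (fun m : ℝ => F ν₀ m) 0 0 := by
    have heq : (fun m : ℝ => F ν₀ m) = fun m : ℝ =>
        ((deriv r ν₀)^2 * (1 + m^2 / ν₀^2),
         (ν₀ * deriv r ν₀ - r ν₀) + (deriv r ν₀ / ν₀) * m^2) := funext fun m => hF ν₀ m
    rw [heq]
    have h1 : HasDerivAt (fun m : ℝ => (deriv r ν₀)^2 * (1 + m^2 / ν₀^2)) 0 0 := by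
      simpa using ((hm2.div_const (ν₀^2)).const_add 1).const_mul ((deriv r ν₀)^2)
    have h2 : HasDerivAt
        (fun m : ℝ => (ν₀ * deriv r ν₀ - r ν₀) + (deriv r ν₀ / ν₀) * m^2) 0 0 := by
      simpa using (hm2.const_mul (deriv r ν₀ / ν₀)).const_add (ν₀ * deriv r ν₀ - r ν₀)
    exact h1.prodMk h2
  have hD2 : D (0, 1) = 0 := hvert.unique hv0
  refine ⟨D, hs, fun s u => ?_⟩
  have hsu : ((s : ℝ), (u : ℝ)) = s • ((1:ℝ), (0:ℝ)) + u • ((0:ℝ), (1:ℝ)) := by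
    simp [Prod.ext_iff]
  rw [hsu, map_add, map_smul, map_smul, hD2, smul_zero, add_zero, hAdef]


/-- Persistence of the self-intersection of the Rankine–Hugoniot curve
`X_m(ν) = ((r'(ν))²(1+m²/ν²), p̌(ν) + (r'(ν)/ν)m²)` for small entropy flux `m`:
if at `m = 0` the curve intersects itself transversely at the Maxwell states,
then nearby self-intersections exist for all small `m ≥ 0`, depending
continuously on `m`. -/
theorem RH_self_intersection_persists
    (r : ℝ → ℝ) (ν₀m ν₀p : ℝ)
    (hr : ContDiffOn ℝ 2 r (Ioi 0))
    (h0m : 0 < ν₀m) (h0p : 0 < ν₀p) (hmp : ν₀m ≠ ν₀p)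
    (F : ℝ → ℝ → ℝ × ℝ)
    (hF : ∀ ν m, F ν m
      = ((deriv r ν)^2 * (1 + m^2 / ν^2),
         (ν * deriv r ν - r ν) + (deriv r ν / ν) * m^2))
    (hint : F ν₀m 0 = F ν₀p 0)
    (htrans : LinearIndependent ℝ
      ![deriv (fun ν => F ν 0) ν₀m, deriv (fun ν => F ν 0) ν₀p]) :
    ∃ ε > (0:ℝ), ∃ νm νp : ℝ → ℝ,
      ContinuousOn νm (Ico 0 ε) ∧ ContinuousOn νp (Ico 0 ε) ∧
      νm 0 = ν₀m ∧ νp 0 = ν₀p ∧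
      ∀ m ∈ Ico (0:ℝ) ε, F (νm m) m = F (νp m) m := by
  obtain ⟨D₁, hs₁, hD₁⟩ := RH_aux r hr F hF ν₀m h0m
  obtain ⟨D₂, hs₂, hD₂⟩ := RH_aux r hr F hF ν₀p h0p
  set A := deriv (fun ν => F ν 0) ν₀m with hA
  set B := deriv (fun ν => F ν 0) ν₀p with hB
  set π₁ : (ℝ × ℝ × ℝ) →L[ℝ] ℝ × ℝ :=
    (ContinuousLinearMap.fst ℝ ℝ (ℝ × ℝ)).prod
      ((ContinuousLinearMap.snd ℝ ℝ ℝ).comp (ContinuousLinearMap.snd ℝ ℝ (ℝ × ℝ))) with hπ₁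
  set π₂ : (ℝ × ℝ × ℝ) →L[ℝ] ℝ × ℝ :=
    ((ContinuousLinearMap.fst ℝ ℝ ℝ).comp (ContinuousLinearMap.snd ℝ ℝ (ℝ × ℝ))).prod
      ((ContinuousLinearMap.snd ℝ ℝ ℝ).comp (ContinuousLinearMap.snd ℝ ℝ (ℝ × ℝ))) with hπ₂
  set π₃ : (ℝ × ℝ × ℝ) →L[ℝ] ℝ :=
    (ContinuousLinearMap.snd ℝ ℝ ℝ).comp (ContinuousLinearMap.snd ℝ ℝ (ℝ × ℝ)) with hπ₃
  set H : ℝ × ℝ × ℝ → (ℝ × ℝ) × ℝ :=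
    fun p => (F p.1 p.2.2 - F p.2.1 p.2.2, p.2.2) with hHdef
  set a : ℝ × ℝ × ℝ := (ν₀m, ν₀p, 0) with ha
  set L : (ℝ × ℝ × ℝ) →L[ℝ] (ℝ × ℝ) × ℝ := (D₁.comp π₁ - D₂.comp π₂).prod π₃ with hL
  have hHs : HasStrictFDerivAt H L a := by
    have h1 : HasStrictFDerivAt (fun p : ℝ × ℝ × ℝ => F p.1 p.2.2) (D₁.comp π₁) a :=
      hs₁.comp a π₁.hasStrictFDerivAt
    have h2 : HasStrictFDerivAt (fun p : ℝ × ℝ × ℝ => F p.2.1 p.2.2) (D₂.comp π₂) a :=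
      hs₂.comp a π₂.hasStrictFDerivAt
    exact HasStrictFDerivAt.prodMk (h1.sub h2) π₃.hasStrictFDerivAt
  have hLapp : ∀ v : ℝ × ℝ × ℝ, L v = (v.1 • A - v.2.1 • B, v.2.2) := by
    intro v
    have e1 : π₁ v = ((v.1 : ℝ), (v.2.2 : ℝ)) := rfl
    have e2 : π₂ v = ((v.2.1 : ℝ), (v.2.2 : ℝ)) := rfl
    simp only [hL, ContinuousLinearMap.prod_apply, ContinuousLinearMap.coe_sub',
      Pi.sub_apply, ContinuousLinearMap.coe_comp', Function.comp_apply, e1, e2,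
      hD₁ v.1 v.2.2, hD₂ v.2.1 v.2.2]
    rfl
  have hLinj : Function.Injective L := by
    have hker : ∀ v : ℝ × ℝ × ℝ, L v = 0 → v = 0 := by
      intro v hv
      rw [hLapp] at hv
      have h3 : v.2.2 = 0 := congrArg Prod.snd hv
      have h12 : v.1 • A - v.2.1 • B = 0 := congrArg Prod.fst hv
      have hco := Fintype.linearIndependent_iff.mp htrans ![v.1, -v.2.1] ?_
      · have h1 := hco 0
        have h2 := hco 1
        simp only [Matrix.cons_val_zero, Matrix.cons_val_one, Matrix.head_cons,
          neg_eq_zero] at h1 h2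
        exact Prod.ext h1 (Prod.ext h2 h3)
      · rw [Fin.sum_univ_two]
        simpa [neg_smul, sub_eq_add_neg] using h12
    intro v w hvw
    have h0 : L (v - w) = 0 := by rw [map_sub, hvw, sub_self]
    exact sub_eq_zero.mp (hker _ h0)
  have hcard : Fintype.card (Fin 2) = Module.finrank ℝ (ℝ × ℝ) := by simp
  have hLsurj : Function.Surjective L := by
    rintro ⟨y, u⟩
    set b := basisOfLinearIndependentOfCardEqFinrank htrans hcard with hb
    have hbco : ⇑b = ![A, B] := coe_basisOfLinearIndependentOfCardEqFinrank htrans hcard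
    have hy := b.sum_repr y
    rw [Fin.sum_univ_two] at hy
    simp only [hbco, Matrix.cons_val_zero, Matrix.cons_val_one, Matrix.head_cons] at hy
    refine ⟨(b.repr y 0, -(b.repr y 1), u), ?_⟩
    rw [hLapp]
    simp only [neg_smul, sub_neg_eq_add]
    rw [hy]
  set e : (ℝ × ℝ × ℝ) ≃L[ℝ] (ℝ × ℝ) × ℝ :=
    (LinearEquiv.ofBijective (L : (ℝ × ℝ × ℝ) →ₗ[ℝ] (ℝ × ℝ) × ℝ)
      ⟨hLinj, hLsurj⟩).toContinuousLinearEquiv with he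
  have hecoe : (e : (ℝ × ℝ × ℝ) →L[ℝ] (ℝ × ℝ) × ℝ) = L :=
    ContinuousLinearMap.ext fun v => rfl
  have hHs' : HasStrictFDerivAt H (e : (ℝ × ℝ × ℝ) →L[ℝ] (ℝ × ℝ) × ℝ) a := by
    rw [hecoe]; exact hHs
  set Ψ := HasStrictFDerivAt.toOpenPartialHomeomorph H hHs' with hΨ
  have hΨcoe : ⇑Ψ = H := HasStrictFDerivAt.toOpenPartialHomeomorph_coe hHs'
  have haH : H a = ((0 : ℝ × ℝ), (0 : ℝ)) := by
    simp only [hHdef, ha]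
    rw [hint]
    simp
  have h0t : ((0 : ℝ × ℝ), (0 : ℝ)) ∈ Ψ.target :=
    haH ▸ HasStrictFDerivAt.image_mem_toOpenPartialHomeomorph_target hHs'
  set q : ℝ → (ℝ × ℝ) × ℝ := fun m => ((0 : ℝ × ℝ), m) with hq
  have hqc : Continuous q := continuous_const.prodMk continuous_id
  have hnh : q ⁻¹' Ψ.target ∈ nhds (0 : ℝ) :=
    (Ψ.open_target.preimage hqc).mem_nhds (by simpa [hq] using h0t)
  obtain ⟨ε, hε, hball⟩ := Metric.mem_nhds_iff.mp hnh
  have hmem : ∀ m ∈ Ico (0:ℝ) ε, q m ∈ Ψ.target := by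
    intro m hm
    apply hball
    rw [Real.ball_eq_Ioo]
    constructor <;> [linarith [hm.1]; linarith [hm.2]]
  have hcont : ContinuousOn (fun m => Ψ.symm (q m)) (Ico (0:ℝ) ε) :=
    Ψ.continuousOn_symm.comp hqc.continuousOn hmem
  refine ⟨ε, hε, fun m => (Ψ.symm (q m)).1, fun m => (Ψ.symm (q m)).2.1,
    continuous_fst.comp_continuousOn hcont,
    (continuous_fst.comp continuous_snd).comp_continuousOn hcont, ?_, ?_, ?_⟩
  · have hq0 : q 0 = Ψ a := by rw [hΨcoe]; exact haH.symm
    show (Ψ.symm (q 0)).1 = ν₀m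
    rw [hq0, Ψ.left_inv (HasStrictFDerivAt.mem_toOpenPartialHomeomorph_source hHs')]
  · have hq0 : q 0 = Ψ a := by rw [hΨcoe]; exact haH.symm
    show (Ψ.symm (q 0)).2.1 = ν₀p
    rw [hq0, Ψ.left_inv (HasStrictFDerivAt.mem_toOpenPartialHomeomorph_source hHs')]
  · intro m hm
    have h1 : Ψ (Ψ.symm (q m)) = q m := Ψ.right_inv (hmem m hm)
    rw [hΨcoe] at h1
    have h2 : (Ψ.symm (q m)).2.2 = m := congrArg Prod.snd h1
    have h3 : F (Ψ.symm (q m)).1 (Ψ.symm (q m)).2.2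
        - F (Ψ.symm (q m)).2.1 (Ψ.symm (q m)).2.2 = 0 := congrArg Prod.fst h1
    rw [h2] at h3
    exact sub_eq_zero.mp h3
end

section
/- Let r, κ : (0,∞) → ℝ be C² with κ > 0, m, c ∈ ℝ, a(ν) = c(m²+ν²)^{1/2}, and j(ν) = r(ν) − a(ν). Suppose ν : ℝ → (0,∞) is a C² solution of κ(ν)ν̈ + (1/2)κ'(ν)ν̇² = j'(ν) with ν(t) → ν⁺, ν̇(t) → 0 as t → +∞ and ν(t) → ν⁻, ν̇(t) → 0 as t → −∞ (where ν⁻ ≠ ν⁺, and j' extends continuously). Then j(ν⁻) = j(ν⁺). -/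
open Set Filter Topology

/-!
Multiplying the profile equation by `ν̇` turns it into `d/dt J(ν, ν̇) = 0` for the first integral
`J(ν, ω) = j(ν) − ½ κ(ν) ω²`, so `J` is constant along the profile. Letting `t → ±∞`, where `ν̇ → 0`,
this constant equals both `j(ν⁻)` and `j(ν⁺)`.
-/

noncomputable def firstIntegral (j κ : ℝ → ℝ) (ν ω : ℝ) : ℝ :=
  j ν - 1 / 2 * κ ν * ω ^ 2

theorem hasDerivAt_firstIntegral {j κ ν dν ddν : ℝ → ℝ} {t : ℝ}
    (hj : DifferentiableAt ℝ j (ν t)) (hκ : DifferentiableAt ℝ κ (ν t))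
    (hν : HasDerivAt ν (dν t) t) (hdν : HasDerivAt dν (ddν t) t)
    (hode : κ (ν t) * ddν t + (1/2) * deriv κ (ν t) * (dν t)^2 = deriv j (ν t)) :
    HasDerivAt (fun s => firstIntegral j κ (ν s) (dν s)) 0 t := by
  have hjν : HasDerivAt (fun s => j (ν s)) (deriv j (ν t) * dν t) t := hj.hasDerivAt.comp t hν
  have hκν : HasDerivAt (fun s => κ (ν s)) (deriv κ (ν t) * dν t) t := hκ.hasDerivAt.comp t hν
  have hJ := hjν.sub ((hκν.const_mul (1 / 2)).mul (hdν.pow 2))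
  refine hJ.congr_deriv ?_
  simp only [Pi.pow_apply, Nat.cast_ofNat]
  linear_combination -dν t * hode

theorem tendsto_firstIntegral_of_tendsto {j κ ν dν : ℝ → ℝ} {l : Filter ℝ} {ν₀ : ℝ}
    (hj : ContinuousAt j ν₀) (hκ : ContinuousAt κ ν₀)
    (hν : Tendsto ν l (𝓝 ν₀)) (hdν : Tendsto dν l (𝓝 0)) :
    Tendsto (fun t => firstIntegral j κ (ν t) (dν t)) l (𝓝 (j ν₀)) := by
  have h := (hj.tendsto.comp hν).sub
    (((hκ.tendsto.comp hν).const_mul (1 / 2)).mul (hdν.pow 2))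
  simpa [firstIntegral] using h

theorem eq_of_tendsto_atBot_atTop_of_hasDerivAt_zero {f : ℝ → ℝ} {x y : ℝ}
    (hf : ∀ t, HasDerivAt f 0 t) (hx : Tendsto f atBot (𝓝 x)) (hy : Tendsto f atTop (𝓝 y)) :
    x = y := by
  have hconst : f = fun _ => f 0 :=
    funext fun t => is_const_of_deriv_eq_zero (fun s => (hf s).differentiableAt)
      (fun s => (hf s).deriv) t 0
  rw [hconst] at hx hy
  exact (tendsto_nhds_unique hx tendsto_const_nhds).trans
    (tendsto_nhds_unique hy tendsto_const_nhds).symm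

theorem kinetic_relation_equal_levels_general
    (r κ : ℝ → ℝ) (m c νminus νplus : ℝ)
    (hr : ContDiffOn ℝ 2 r (Ioi 0))
    (hκ : ContDiffOn ℝ 2 κ (Ioi 0))
    (a j : ℝ → ℝ)
    (ha : ∀ ν, a ν = c * Real.sqrt (m^2 + ν^2))
    (hj : ∀ ν, j ν = r ν - a ν)
    (hmν : 0 < νminus) (hpν : 0 < νplus)
    (ν dν ddν : ℝ → ℝ)
    (hνpos : ∀ t, 0 < ν t)
    (hν' : ∀ t, HasDerivAt ν (dν t) t)
    (hν'' : ∀ t, HasDerivAt dν (ddν t) t)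
    (hode : ∀ t, κ (ν t) * ddν t + (1/2) * deriv κ (ν t) * (dν t)^2 = deriv j (ν t))
    (hlimp : Tendsto ν atTop (nhds νplus))
    (hlimp' : Tendsto dν atTop (nhds 0))
    (hlimm : Tendsto ν atBot (nhds νminus))
    (hlimm' : Tendsto dν atBot (nhds 0)) :
    j νminus = j νplus := by
  have hrd : ∀ x > 0, DifferentiableAt ℝ r x := fun x hx =>
    (hr.contDiffAt (Ioi_mem_nhds hx)).differentiableAt (by norm_num)
  have hκd : ∀ x > 0, DifferentiableAt ℝ κ x := fun x hx =>
    (hκ.contDiffAt (Ioi_mem_nhds hx)).differentiableAt (by norm_num)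
  have hjd : ∀ x > 0, DifferentiableAt ℝ j x := fun x hx => by
    rw [show j = fun y => r y - c * Real.sqrt (m ^ 2 + y ^ 2) from
      funext fun y => by rw [hj, ha]]
    have hsq : m ^ 2 + x ^ 2 ≠ 0 := by positivity
    exact (hrd x hx).sub (by fun_prop (disch := exact hsq))
  refine eq_of_tendsto_atBot_atTop_of_hasDerivAt_zero
    (fun t => hasDerivAt_firstIntegral (hjd _ (hνpos t)) (hκd _ (hνpos t)) (hν' t) (hν'' t) (hode t))
    ?_ ?_
  · exact tendsto_firstIntegral_of_tendsto (hjd _ hmν).continuousAt (hκd _ hmν).continuousAt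
      hlimm hlimm'
  · exact tendsto_firstIntegral_of_tendsto (hjd _ hpν).continuousAt (hκd _ hpν).continuousAt
      hlimp hlimp'

/-- The kinetic relation: along any heteroclinic profile of
`κ(ν)ν̈ + ½κ'(ν)ν̇² = j'(ν)` with `j = r − a`, `a(ν) = c√(m²+ν²)`, the effective
potential takes equal values at the two end states. -/
theorem kinetic_relation_equal_levels
    (r κ : ℝ → ℝ) (m c νminus νplus : ℝ)
    (hr : ContDiffOn ℝ 2 r (Ioi 0))
    (hκ : ContDiffOn ℝ 2 κ (Ioi 0))
    (hκpos : ∀ ν > (0:ℝ), 0 < κ ν)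
    (a j : ℝ → ℝ)
    (ha : ∀ ν, a ν = c * Real.sqrt (m^2 + ν^2))
    (hj : ∀ ν, j ν = r ν - a ν)
    (hmν : 0 < νminus) (hpν : 0 < νplus) (hne : νminus ≠ νplus)
    (ν dν ddν : ℝ → ℝ)
    (hνpos : ∀ t, 0 < ν t)
    (hν' : ∀ t, HasDerivAt ν (dν t) t)
    (hν'' : ∀ t, HasDerivAt dν (ddν t) t)
    (hode : ∀ t, κ (ν t) * ddν t + (1/2) * deriv κ (ν t) * (dν t)^2 = deriv j (ν t))
    (hlimp : Tendsto ν atTop (nhds νplus))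
    (hlimp' : Tendsto dν atTop (nhds 0))
    (hlimm : Tendsto ν atBot (nhds νminus))
    (hlimm' : Tendsto dν atBot (nhds 0)) :
    j νminus = j νplus :=
  kinetic_relation_equal_levels_general r κ m c νminus νplus hr hκ a j ha hj hmν hpν ν dν ddν hνpos
    hν' hν'' hode hlimp hlimp' hlimm hlimm'
end
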